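/- Let A be a ⊖-algebra and let x, y be prime ideals of A such that ¬a ∉ x for every a ∈ y. Then the set x + y := {a ∈ A | ∃b ∈ y, a ⊖ b ∈ x} is again a prime ideal of A. -/
import Mathlib


class OminusAlgebra (A : Type*) extends DistribLattice A, BoundedOrder A where
  ominus : A → A → A
  inf_ominus : ∀ a b c : A, ominus (a ⊓ b) c = ominus a c ⊓ ominus b c
  sup_ominus : ∀ a b c : A, ominus (a ⊔ b) c = ominus a c ⊔ ominus b c
  ominus_inf : ∀ a b c : A, ominus a (b ⊓ c) = ominus a b ⊔ ominus a c
  ominus_sup : ∀ a b c : A, ominus a (b ⊔ c) = ominus a b ⊓ ominus a c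
  bot_ominus : ∀ a : A, ominus ⊥ a = ⊥
  ominus_top : ∀ a : A, ominus a ⊤ = ⊥
  ominus_bot : ∀ a : A, ominus a ⊥ = a

infixl:65 " ⊖ " => OminusAlgebra.ominus

variable {A : Type*} [OminusAlgebra A]

def oneg (a : A) : A := ⊤ ⊖ a

def oplus (a b : A) : A := oneg (oneg a ⊖ b)

def IsPrimeIdeal (x : Set A) : Prop :=
  x.Nonempty ∧ (∀ a b : A, a ≤ b → b ∈ x → a ∈ x) ∧
    (∀ a b : A, a ∈ x → b ∈ x → a ⊔ b ∈ x) ∧ x ≠ Set.univ ∧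
    (∀ a b : A, a ⊓ b ∈ x → a ∈ x ∨ b ∈ x)

def ineg (x : Set A) : Set A := {a | oneg a ∉ x}

def domPlus (x y : Set A) : Prop := y ⊆ ineg x

def pplus (x y : Set A) : Set A := {a | ∃ b ∈ y, a ⊖ b ∈ x}

def domStar (x y : Set A) : Prop := ¬ ineg x ⊆ y

def pstar (x y : Set A) : Set A := {a | ∀ b ∉ y, a ⊖ b ∈ x}


lemma ominus_mono_left {A : Type*} [OminusAlgebra A] {a b : A} (c : A) (h : a ≤ b) :
    a ⊖ c ≤ b ⊖ c := by
  have e := OminusAlgebra.inf_ominus a b c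
  rw [inf_eq_left.mpr h] at e
  exact e ▸ inf_le_right

lemma ominus_anti_right {A : Type*} [OminusAlgebra A] (a : A) {b c : A} (h : b ≤ c) :
    a ⊖ c ≤ a ⊖ b := by
  have e := OminusAlgebra.ominus_sup a b c
  rw [sup_eq_right.mpr h] at e
  exact e ▸ inf_le_left

theorem stmt9 {A : Type*} [OminusAlgebra A] (x y : Set A)
    (hx : IsPrimeIdeal x) (hy : IsPrimeIdeal y)
    (h : ∀ a ∈ y, oneg a ∉ x) :
    IsPrimeIdeal (pplus x y) := by
  obtain ⟨⟨a0, ha0⟩, hxd, hxj, hxp, hxpr⟩ := hx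
  obtain ⟨⟨b0, hb0⟩, hyd, hyj, hyp, hypr⟩ := hy
  have hbx : (⊥ : A) ∈ x := hxd ⊥ a0 bot_le ha0
  have hby : (⊥ : A) ∈ y := hyd ⊥ b0 bot_le hb0
  refine ⟨⟨⊥, ⊥, hby, by rwa [OminusAlgebra.bot_ominus]⟩, ?_, ?_, ?_, ?_⟩
  · rintro a b hab ⟨c, hc, hbc⟩
    exact ⟨c, hc, hxd _ _ (ominus_mono_left c hab) hbc⟩
  · rintro a b ⟨c, hc, hac⟩ ⟨d, hd, hbd⟩
    refine ⟨c ⊔ d, hyj _ _ hc hd, ?_⟩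
    rw [OminusAlgebra.sup_ominus]
    refine hxj _ _ (hxd _ _ ?_ hac) (hxd _ _ ?_ hbd)
    · exact ominus_anti_right a le_sup_left
    · exact ominus_anti_right b le_sup_right
  · intro heq
    have : (⊤ : A) ∈ pplus x y := heq ▸ Set.mem_univ _
    obtain ⟨c, hc, htc⟩ := this
    exact h c hc htc
  · rintro a b ⟨c, hc, habc⟩
    rw [OminusAlgebra.inf_ominus] at habc
    rcases hxpr _ _ habc with h1 | h1
    · exact Or.inl ⟨c, hc, h1⟩
    · exact Or.inr ⟨c, hc, h1⟩
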